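/- For the full singularly perturbed system ξ' = (P_d − Σᵢ αᵢ zᵢ)/ᾱ, ε z₁' = ξ − z₁, ε zᵢ' = z_{i-1} − zᵢ (i = 2,…,n), with all αᵢ > 0, the linearization matrix at the equilibrium is Hurwitz for all sufficiently small ε > 0; consequently the equilibrium (ξ₀, ξ₀·1) with ξ₀ = P_d/Σᵢαᵢ is locally asymptotically stable for all sufficiently small ε > 0. -/

import Mathlib

/-
Write `A = ∑ᵢ αᵢ / ᾱ`. Measured in the coordinates `y₀` and `yₖ - y₀`, with weights `2⁻ᵏ` on the
deviations, the quadratic form `V(y) = y₀² + ∑ₖ 2⁻ᵏ (yₖ - y₀)²` satisfies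
`V(y, M(ε) y) ≤ -(A/2) V(y)` once `ε` is small: the weights make the fast cascade
`ε zₖ' = z_{k-1} - zₖ` dissipate the deviations at rate `2⁻ⁿ/(4ε)`, which absorbs every coupling
term, while the slow variable decays at rate `A`. Such a strict Lyapunov inequality bounds the real
part of every eigenvalue by `-A/2` (take real and imaginary parts of an eigenvector) and makes `V`
decay exponentially along every trajectory of `y' = M(ε) y`; apply it to `x - ξ₀ 𝟙`.
-/

open Filter Matrix Topology

lemma le_mul_exp_of_hasDerivAt_le {f f' : ℝ → ℝ} {c : ℝ} (hf : ∀ t, HasDerivAt f (f' t) t)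
    (hf' : ∀ t, f' t ≤ -c * f t) {t : ℝ} (ht : 0 ≤ t) : f t ≤ f 0 * Real.exp (-(c * t)) := by
  have hg : ∀ s, HasDerivAt (fun s => f s * Real.exp (c * s))
      (f' s * Real.exp (c * s) + f s * (Real.exp (c * s) * c)) s := fun s =>
    (hf s).mul (((hasDerivAt_id s).const_mul c).exp.congr_deriv (by simp))
  have hanti : Antitone fun s => f s * Real.exp (c * s) := by
    refine antitone_of_deriv_nonpos (fun s => (hg s).differentiableAt) fun s => ?_
    rw [(hg s).deriv]
    nlinarith [hf' s, Real.exp_pos (c * s)]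
  have hdecay : f t * Real.exp (c * t) ≤ f 0 := by simpa using hanti ht
  calc f t = f t * Real.exp (c * t) * Real.exp (-(c * t)) := by
        rw [mul_assoc, ← Real.exp_add, add_neg_cancel, Real.exp_zero, mul_one]
    _ ≤ f 0 * Real.exp (-(c * t)) := mul_le_mul_of_nonneg_right hdecay (Real.exp_pos _).le

section WeightedForm

variable {ι κ : Type*} [Fintype κ]

def weightedForm (w : κ → ℝ) (T : (ι → ℝ) →ₗ[ℝ] κ → ℝ) (y z : ι → ℝ) : ℝ :=
  ∑ k, w k * (T y k * T z k)

variable {w : κ → ℝ} {T : (ι → ℝ) →ₗ[ℝ] κ → ℝ}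

lemma weightedForm_comm (y z : ι → ℝ) : weightedForm w T y z = weightedForm w T z y := by
  simp only [weightedForm, mul_comm (T y _)]

lemma weightedForm_smul_add_smul (y z₁ z₂ : ι → ℝ) (a b : ℝ) :
    weightedForm w T y (a • z₁ + b • z₂) =
      a * weightedForm w T y z₁ + b * weightedForm w T y z₂ := by
  simp only [weightedForm, map_add, map_smul, Pi.add_apply, Pi.smul_apply, smul_eq_mul,
    Finset.mul_sum, ← Finset.sum_add_distrib]
  exact Finset.sum_congr rfl fun k _ => by ring

lemma weightedForm_self_nonneg (hw : ∀ k, 0 ≤ w k) (y : ι → ℝ) : 0 ≤ weightedForm w T y y :=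
  Finset.sum_nonneg fun k _ => mul_nonneg (hw k) (mul_self_nonneg _)

lemma mul_sq_le_weightedForm_self (hw : ∀ k, 0 ≤ w k) (y : ι → ℝ) (k : κ) :
    w k * T y k ^ 2 ≤ weightedForm w T y y := by
  rw [sq]
  exact Finset.single_le_sum (f := fun k => w k * (T y k * T y k))
    (fun k _ => mul_nonneg (hw k) (mul_self_nonneg _)) (Finset.mem_univ k)

lemma weightedForm_self_pos (hw : ∀ k, 0 < w k) (hT : Function.Injective T) {y : ι → ℝ}
    (hy : y ≠ 0) : 0 < weightedForm w T y y := by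
  obtain ⟨k, hk⟩ : ∃ k, T y k ≠ 0 := Function.ne_iff.mp ((map_ne_zero_iff T hT).mpr hy)
  calc 0 < w k * T y k ^ 2 := mul_pos (hw k) (by positivity)
    _ ≤ weightedForm w T y y := mul_sq_le_weightedForm_self (fun k => (hw k).le) y k

theorem re_le_of_weightedForm_mulVec_le [Fintype ι] [DecidableEq ι] (hw : ∀ k, 0 < w k)
    (hT : Function.Injective T) {A : Matrix ι ι ℝ} {c : ℝ}
    (hA : ∀ y, weightedForm w T y (A *ᵥ y) ≤ -c * weightedForm w T y y) {lam : ℂ}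
    (hlam : (A.map Complex.ofReal - lam • (1 : Matrix ι ι ℂ)).det = 0) : lam.re ≤ -c := by
  obtain ⟨v, hv0, hv⟩ := exists_mulVec_eq_zero_iff.mpr hlam
  have hAv : ∀ i, ∑ j, (A i j : ℂ) * v j = lam * v i := fun i => by
    have := congrFun hv i
    rw [sub_mulVec, smul_mulVec, one_mulVec, Pi.sub_apply, Pi.zero_apply, sub_eq_zero] at this
    simpa [mulVec, dotProduct] using this
  set p : ι → ℝ := fun i => (v i).re
  set q : ι → ℝ := fun i => (v i).im
  have hp : A *ᵥ p = lam.re • p + (-lam.im) • q := funext fun i => by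
    simpa [mulVec, dotProduct, Complex.re_sum, sub_eq_add_neg] using congrArg Complex.re (hAv i)
  have hq : A *ᵥ q = lam.im • p + lam.re • q := funext fun i => by
    simpa [mulVec, dotProduct, Complex.im_sum, add_comm] using congrArg Complex.im (hAv i)
  have hpq : 0 < weightedForm w T p p + weightedForm w T q q := by
    have hw' : ∀ k, 0 ≤ w k := fun k => (hw k).le
    by_cases hp0 : p = 0
    · have hq0 : q ≠ 0 := fun hq0 => hv0 (funext fun i => Complex.ext
        (congrFun hp0 i) (congrFun hq0 i))
      exact add_pos_of_nonneg_of_pos (weightedForm_self_nonneg hw' p)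
        (weightedForm_self_pos hw hT hq0)
    · exact add_pos_of_pos_of_nonneg (weightedForm_self_pos hw hT hp0)
        (weightedForm_self_nonneg hw' q)
  have hsum : weightedForm w T p (A *ᵥ p) + weightedForm w T q (A *ᵥ q)
      = lam.re * (weightedForm w T p p + weightedForm w T q q) := by
    rw [hp, hq, weightedForm_smul_add_smul, weightedForm_smul_add_smul, weightedForm_comm q p]
    ring
  have hle : lam.re * (weightedForm w T p p + weightedForm w T q q) ≤
      -c * (weightedForm w T p p + weightedForm w T q q) := by
    rw [← hsum]
    linarith [hA p, hA q]
  exact le_of_mul_le_mul_right hle hpq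

lemma hasDerivAt_weightedForm_self [Fintype ι] {y : ℝ → ι → ℝ} {y' : ι → ℝ} {t : ℝ}
    (hy : HasDerivAt y y' t) :
    HasDerivAt (fun s => weightedForm w T (y s) (y s)) (2 * weightedForm w T (y t) y') t := by
  have hTy : ∀ k, HasDerivAt (fun s => T (y s) k) (T y' k) t :=
    hasDerivAt_pi.mp ((LinearMap.toContinuousLinearMap T).hasFDerivAt.comp_hasDerivAt t hy)
  have hsum : HasDerivAt (fun s => weightedForm w T (y s) (y s))
      (∑ k, w k * (T y' k * T (y t) k + T (y t) k * T y' k)) t :=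
    HasDerivAt.fun_sum fun k _ => ((hTy k).mul (hTy k)).const_mul (w k)
  convert hsum using 1
  simp only [weightedForm, Finset.mul_sum]
  exact Finset.sum_congr rfl fun k _ => by ring

lemma tendsto_zero_of_weightedForm_self_tendsto_zero [Fintype ι] (hw : ∀ k, 0 < w k)
    (hT : Function.Injective T) {α : Type*} {l : Filter α} {y : α → ι → ℝ}
    (hV : Tendsto (fun a => weightedForm w T (y a) (y a)) l (𝓝 0)) : Tendsto y l (𝓝 0) := by
  have hTy : Tendsto (fun a => T (y a)) l (𝓝 0) := tendsto_pi_nhds.mpr fun k => by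
    have hbound := (hV.div_const (w k)).sqrt
    rw [zero_div, Real.sqrt_zero] at hbound
    refine squeeze_zero_norm (fun a => Real.abs_le_sqrt ?_) hbound
    rw [le_div_iff₀' (hw k)]
    exact mul_sq_le_weightedForm_self (fun k => (hw k).le) (y a) k
  obtain ⟨S, hS⟩ := T.exists_leftInverse_of_injective (LinearMap.ker_eq_bot.mpr hT)
  have hy : y = fun a => S (T (y a)) := funext fun a => (LinearMap.congr_fun hS (y a)).symm
  rw [hy, ← map_zero S]
  exact ((LinearMap.continuous_of_finiteDimensional S).tendsto 0).comp hTy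

theorem tendsto_zero_of_weightedForm_mulVec_le [Fintype ι] (hw : ∀ k, 0 < w k)
    (hT : Function.Injective T) {A : Matrix ι ι ℝ} {c : ℝ} (hc : 0 < c)
    (hA : ∀ y, weightedForm w T y (A *ᵥ y) ≤ -c * weightedForm w T y y)
    {y : ℝ → ι → ℝ} (hy : ∀ t, HasDerivAt y (A *ᵥ y t) t) : Tendsto y atTop (𝓝 0) := by
  set V := fun t => weightedForm w T (y t) (y t)
  have hdecay : ∀ t, 0 ≤ t → V t ≤ V 0 * Real.exp (-(2 * c * t)) :=
    fun t => le_mul_exp_of_hasDerivAt_le (fun t => hasDerivAt_weightedForm_self (hy t))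
      (fun t => by linarith [hA (y t)])
  have hexp : Tendsto (fun t => V 0 * Real.exp (-(2 * c * t))) atTop (𝓝 0) := by
    simpa using (Real.tendsto_exp_atBot.comp (tendsto_neg_atTop_atBot.comp
      (tendsto_id.const_mul_atTop (by positivity : 0 < 2 * c)))).const_mul (V 0)
  refine tendsto_zero_of_weightedForm_self_tendsto_zero hw hT
    (tendsto_of_tendsto_of_tendsto_of_le_of_le' tendsto_const_nhds hexp
      (Eventually.of_forall fun t => weightedForm_self_nonneg (fun k => (hw k).le) (y t)) ?_)
  filter_upwards [eventually_ge_atTop 0] with t ht using hdecay t ht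

theorem tendsto_of_weightedForm_mulVec_le [Fintype ι] (hw : ∀ k, 0 < w k)
    (hT : Function.Injective T) {A : Matrix ι ι ℝ} {c : ℝ} (hc : 0 < c)
    (hA : ∀ y, weightedForm w T y (A *ᵥ y) ≤ -c * weightedForm w T y y)
    {b xₑ : ι → ℝ} (hxₑ : A *ᵥ xₑ + b = 0) {x : ℝ → ι → ℝ}
    (hx : ∀ t i, HasDerivAt (fun s => x s i) (∑ j, A i j * x t j + b i) t) :
    Tendsto x atTop (𝓝 xₑ) := by
  have hy : ∀ t, HasDerivAt (fun s => x s - xₑ) (A *ᵥ (x t - xₑ)) t := fun t =>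
    hasDerivAt_pi.mpr fun i => by
      convert (hx t i).sub_const (xₑ i) using 1
      · rfl
      · rw [mulVec_sub, Pi.sub_apply, eq_neg_of_add_eq_zero_left (congrFun hxₑ i)]
        simp only [mulVec, dotProduct, sub_neg_eq_add]
  simpa using (tendsto_zero_of_weightedForm_mulVec_le hw hT hc hA hy).add_const xₑ

end WeightedForm

lemma quadratic_coupling_le {A u S T Q G F : ℝ} (hA : 0 < A) (hS : S ^ 2 ≤ A * Q)
    (hT : T ^ 2 ≤ Q) (hGQ : G ≤ Q) (hF : F ≤ -(3 * (1 + A)) * Q) :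
    u * -(A * u + S) + (F + (A * u + S) * T) ≤ -(A / 2) * (u * u + G) := by
  -- three applications of `2ab ≤ a² + b²`; then `hF` absorbs every `Q` term
  have h₁ : -(u * S) ≤ A / 4 * u ^ 2 + Q := by nlinarith [sq_nonneg (A * u / 2 + S)]
  have h₂ : A * u * T ≤ A / 4 * u ^ 2 + A * Q := by
    nlinarith [mul_nonneg hA.le (sq_nonneg (u / 2 - T))]
  have h₃ : S * T ≤ (A * Q + Q) / 2 := by nlinarith [sq_nonneg (S - T)]
  nlinarith [mul_le_mul_of_nonneg_left hGQ hA.le]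

lemma sum_two_inv_pow_succ_le_one (n : ℕ) : ∑ i : Fin n, (2 : ℝ)⁻¹ ^ ((i : ℕ) + 1) ≤ 1 := by
  have h := sum_geometric_two_le n
  rw [Fin.sum_univ_eq_sum_range (fun i => (2 : ℝ)⁻¹ ^ (i + 1))]
  simp only [pow_succ, ← Finset.sum_mul, one_div] at h ⊢
  linarith

lemma sum_cascade_le {n : ℕ} (f : Fin (n + 1) → ℝ) (hf : f 0 = 0) :
    ∑ i : Fin n, (2 : ℝ)⁻¹ ^ ((i : ℕ) + 1) * (f i.succ * (f i.castSucc - f i.succ)) ≤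
      -(1 / 4) * ∑ i : Fin n, (2 : ℝ)⁻¹ ^ ((i : ℕ) + 1) * f i.succ ^ 2 := by
  set G := ∑ i : Fin n, (2 : ℝ)⁻¹ ^ ((i : ℕ) + 1) * f i.succ ^ 2
  set P := ∑ i : Fin n, (2 : ℝ)⁻¹ ^ ((i : ℕ) + 1) * f i.castSucc ^ 2
  -- the weights halve from one stage to the next, so the predecessor terms carry at most `G / 2`
  have hprev : P ≤ G / 2 := by
    have hsucc := Fin.sum_univ_succ fun j : Fin (n + 1) => (2 : ℝ)⁻¹ ^ (j : ℕ) * f j ^ 2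
    have hcast := Fin.sum_univ_castSucc fun j : Fin (n + 1) => (2 : ℝ)⁻¹ ^ (j : ℕ) * f j ^ 2
    have hhalf : P = 2⁻¹ * ∑ i : Fin n, (2 : ℝ)⁻¹ ^ (i : ℕ) * f i.castSucc ^ 2 := by
      simp only [P, Finset.mul_sum, pow_succ]
      exact Finset.sum_congr rfl fun i _ => by ring
    have hlast : 0 ≤ (2 : ℝ)⁻¹ ^ n * f (Fin.last n) ^ 2 := by positivity
    simp only [Fin.val_succ, Fin.val_castSucc, Fin.val_last, hf, zero_pow two_ne_zero, mul_zero,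
      zero_add] at hsucc hcast
    change _ = G at hsucc
    linarith
  calc _ ≤ ∑ i : Fin n, (2 : ℝ)⁻¹ ^ ((i : ℕ) + 1) * ((f i.castSucc ^ 2 - f i.succ ^ 2) / 2) :=
        Finset.sum_le_sum fun i _ => mul_le_mul_of_nonneg_left
          (by nlinarith [sq_nonneg (f i.castSucc - f i.succ)]) (by positivity)
    _ = P / 2 - G / 2 := by
        simp only [P, G, Finset.sum_div, ← Finset.sum_sub_distrib]
        exact Finset.sum_congr rfl fun i _ => by ring
    _ ≤ _ := by linarith

lemma sum_cascade_div_le {n : ℕ} (f : Fin (n + 1) → ℝ) (hf : f 0 = 0) {ε K : ℝ} (hε : 0 < ε)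
    (hεK : ε * (2 ^ n * 4 * K) ≤ 1) :
    (∑ i : Fin n, (2 : ℝ)⁻¹ ^ ((i : ℕ) + 1) * (f i.succ * (f i.castSucc - f i.succ))) / ε ≤
      -K * ∑ i : Fin n, f i.succ ^ 2 := by
  have hweight : (2 : ℝ)⁻¹ ^ n * ∑ i : Fin n, f i.succ ^ 2 ≤
      ∑ i : Fin n, (2 : ℝ)⁻¹ ^ ((i : ℕ) + 1) * f i.succ ^ 2 := by
    rw [Finset.mul_sum]
    exact Finset.sum_le_sum fun i _ => mul_le_mul_of_nonneg_right
      (pow_le_pow_of_le_one (by norm_num) (by norm_num) i.isLt) (sq_nonneg _)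
  have hεw : K * ε ≤ (2 : ℝ)⁻¹ ^ n / 4 := by
    rw [inv_pow, ← one_div, div_div, le_div_iff₀ (by positivity)]
    linarith
  have hQ : 0 ≤ ∑ i : Fin n, f i.succ ^ 2 := Finset.sum_nonneg fun i _ => sq_nonneg _
  rw [div_le_iff₀ hε]
  nlinarith [sum_cascade_le f hf, mul_le_mul_of_nonneg_right hεw hQ]

def headDeviation (n : ℕ) : (Fin (n + 1) → ℝ) →ₗ[ℝ] Fin (n + 1) → ℝ where
  toFun y := Fin.cons (y 0) fun i => y i.succ - y 0
  map_add' y z := by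
    ext j
    cases j using Fin.cases
    · rfl
    · simp only [Pi.add_apply, Fin.cons_succ]; ring
  map_smul' a y := by
    ext j
    cases j using Fin.cases <;> simp [mul_sub]

lemma headDeviation_injective (n : ℕ) : Function.Injective (headDeviation n) := by
  intro y z h
  have h0 : y 0 = z 0 := by simpa [headDeviation] using congrFun h 0
  ext j
  cases j using Fin.cases with
  | zero => exact h0
  | succ i => simpa [headDeviation, h0] using congrFun h i.succ

noncomputable def cascadeMatrix {n : ℕ} (β : Fin n → ℝ) (ε : ℝ) :
    Matrix (Fin (n + 1)) (Fin (n + 1)) ℝ :=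
  Matrix.of <| Fin.cases (Fin.cons 0 (-β)) fun i j =>
    ((if j = i.castSucc then 1 else 0) - if j = i.succ then 1 else 0) / ε

noncomputable def cascadeForm (n : ℕ) : (Fin (n + 1) → ℝ) → (Fin (n + 1) → ℝ) → ℝ :=
  weightedForm (fun j : Fin (n + 1) => (2 : ℝ)⁻¹ ^ (j : ℕ)) (headDeviation n)

section Cascade

variable {n : ℕ}

lemma cascadeMatrix_mulVec_zero (β : Fin n → ℝ) (ε : ℝ) (y : Fin (n + 1) → ℝ) :
    (cascadeMatrix β ε *ᵥ y) 0 = -∑ i, β i * y i.succ := by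
  simp [cascadeMatrix, mulVec, dotProduct, Fin.sum_univ_succ]

lemma cascadeMatrix_mulVec_succ (β : Fin n → ℝ) (ε : ℝ) (y : Fin (n + 1) → ℝ) (i : Fin n) :
    (cascadeMatrix β ε *ᵥ y) i.succ = (y i.castSucc - y i.succ) / ε := by
  simp [cascadeMatrix, mulVec, dotProduct, sub_mul, Finset.sum_sub_distrib, sub_div, ite_div]
  ring

lemma cascadeMatrix_apply (β : Fin n → ℝ) (ε : ℝ) (i j : Fin (n + 1)) :
    cascadeMatrix β ε i j =
      if hi : (i : ℕ) = 0 then (if hj : (j : ℕ) = 0 then 0 else -β ⟨(j : ℕ) - 1, by omega⟩)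
      else if (j : ℕ) = (i : ℕ) then -1 / ε else if (j : ℕ) + 1 = (i : ℕ) then 1 / ε else 0 := by
  cases i using Fin.cases with
  | zero => cases j using Fin.cases <;> simp [cascadeMatrix]
  | succ i =>
    simp only [cascadeMatrix, Fin.val_succ, Fin.ext_iff, Fin.val_castSucc, of_apply,
      Fin.cases_succ]
    split_ifs <;> first | contradiction | omega | ring

lemma cascadeMatrix_mulVec_const (β : Fin n → ℝ) (ε a : ℝ) :
    cascadeMatrix β ε *ᵥ (fun _ => a) = Pi.single 0 (-(∑ i, β i) * a) := by
  ext i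
  cases i using Fin.cases with
  | zero => simp [cascadeMatrix_mulVec_zero, Finset.sum_mul]
  | succ i => simp [cascadeMatrix_mulVec_succ]

lemma cascadeForm_apply (y z : Fin (n + 1) → ℝ) :
    cascadeForm n y z =
      y 0 * z 0 +
        ∑ i : Fin n, (2 : ℝ)⁻¹ ^ ((i : ℕ) + 1) * ((y i.succ - y 0) * (z i.succ - z 0)) := by
  simp [cascadeForm, weightedForm, headDeviation, Fin.sum_univ_succ]

theorem cascadeForm_mulVec_le {β : Fin n → ℝ} (hβ0 : ∀ i, 0 ≤ β i) (hβ1 : ∀ i, β i ≤ 1)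
    (hA : 0 < ∑ i, β i) {ε : ℝ} (hε : 0 < ε) (hεs : ε * (2 ^ n * 12 * (1 + ∑ i, β i)) ≤ 1)
    (y : Fin (n + 1) → ℝ) :
    cascadeForm n y (cascadeMatrix β ε *ᵥ y) ≤ -((∑ i, β i) / 2) * cascadeForm n y y := by
  set A := ∑ i, β i
  set f : Fin (n + 1) → ℝ := fun j => y j - y 0
  set w : Fin n → ℝ := fun i => (2 : ℝ)⁻¹ ^ ((i : ℕ) + 1)
  set S := ∑ i, β i * f i.succ
  set T := ∑ i, w i * f i.succ
  set Q := ∑ i : Fin n, f i.succ ^ 2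
  set G := ∑ i, w i * f i.succ ^ 2
  set F := ∑ i, w i * (f i.succ * (f i.castSucc - f i.succ))
  have hform : cascadeForm n y (cascadeMatrix β ε *ᵥ y) =
      y 0 * -(A * y 0 + S) + (F / ε + (A * y 0 + S) * T) := by
    have hβy : ∑ i, β i * y i.succ = A * y 0 + S := by
      simp only [A, S, f, Finset.sum_mul, ← Finset.sum_add_distrib]
      exact Finset.sum_congr rfl fun i _ => by ring
    rw [cascadeForm_apply, cascadeMatrix_mulVec_zero, hβy]
    simp only [F, T, Finset.sum_div, Finset.mul_sum, ← Finset.sum_add_distrib]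
    congr 1
    refine Finset.sum_congr rfl fun i _ => ?_
    rw [cascadeMatrix_mulVec_succ]
    simp only [w, f]
    field_simp
    ring
  have hself : cascadeForm n y y = y 0 * y 0 + G := by
    rw [cascadeForm_apply]
    exact congrArg _ (Finset.sum_congr rfl fun i _ => by ring)
  have hw0 : ∀ i, 0 ≤ w i := fun i => by positivity
  have hw1 : ∀ i, w i ≤ 1 := fun i => pow_le_one₀ (by norm_num) (by norm_num)
  have hQ : 0 ≤ Q := Finset.sum_nonneg fun i _ => sq_nonneg _
  have hS : S ^ 2 ≤ A * Q := (Finset.sum_mul_sq_le_sq_mul_sq _ _ _).trans <|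
    mul_le_mul_of_nonneg_right (Finset.sum_le_sum fun i _ => by nlinarith [hβ0 i, hβ1 i]) hQ
  have hT : T ^ 2 ≤ Q := (Finset.sum_mul_sq_le_sq_mul_sq _ _ _).trans <| by
    have : ∑ i, w i ^ 2 ≤ 1 := (Finset.sum_le_sum fun i _ =>
      show w i ^ 2 ≤ w i by nlinarith [hw0 i, hw1 i]).trans (sum_two_inv_pow_succ_le_one n)
    nlinarith
  have hGQ : G ≤ Q := Finset.sum_le_sum fun i _ => by nlinarith [hw1 i, sq_nonneg (f i.succ)]
  have hF : F / ε ≤ -(3 * (1 + A)) * Q :=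
    sum_cascade_div_le f (sub_self _) hε (by linarith)
  rw [hform, hself]
  exact quadratic_coupling_le hA hS hT hGQ hF

end Cascade

/-- For the full singularly perturbed system ξ' = (P_d − ∑ αᵢ zᵢ)/ᾱ, ε z₁' = ξ − z₁,
ε zᵢ' = z_{i-1} − zᵢ, the system matrix M(ε) is Hurwitz for all sufficiently small
ε > 0, and consequently the equilibrium (ξ₀, ξ₀·1) with ξ₀ = P_d/∑αᵢ is
asymptotically stable for all sufficiently small ε > 0. -/
theorem stmt9 (n : ℕ) (hn : 1 ≤ n)
    (Pd : ℝ) (α : Fin n → ℝ) (hα : ∀ i, 0 < α i)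
    (abar : ℝ) (habar : abar = Finset.univ.sup' (Finset.univ_nonempty_iff.mpr ⟨⟨0, hn⟩⟩) α)
    (M : ℝ → Matrix (Fin (n + 1)) (Fin (n + 1)) ℝ)
    (hM : ∀ ε : ℝ, ∀ i j : Fin (n + 1), M ε i j =
      if hi : (i : ℕ) = 0 then
        (if hj : (j : ℕ) = 0 then 0 else -(α ⟨(j : ℕ) - 1, by omega⟩) / abar)
      else
        if (j : ℕ) = (i : ℕ) then -1 / ε
        else if (j : ℕ) + 1 = (i : ℕ) then 1 / ε else 0) :
    ∃ εstar : ℝ, 0 < εstar ∧ ∀ ε : ℝ, 0 < ε → ε < εstar →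
      ((∀ lam : ℂ,
          (((M ε).map Complex.ofReal) - lam • (1 : Matrix (Fin (n + 1)) (Fin (n + 1)) ℂ)).det = 0
          → lam.re < 0) ∧
        (∀ x : ℝ → Fin (n + 1) → ℝ,
          (∀ t : ℝ, ∀ i : Fin (n + 1),
            HasDerivAt (fun s => x s i)
              (∑ j : Fin (n + 1), M ε i j * x t j +
                (if (i : ℕ) = 0 then Pd / abar else 0)) t) →
          ∀ i : Fin (n + 1),
            Tendsto (fun t => x t i) atTop (nhds (Pd / ∑ i : Fin n, α i)))) := by
  have hαle : ∀ i, α i ≤ abar := fun i => habar ▸ Finset.le_sup' α (Finset.mem_univ i)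
  have habar_pos : 0 < abar := (hα ⟨0, hn⟩).trans_le (hαle _)
  have hαsum : 0 < ∑ i, α i := Finset.sum_pos (fun i _ => hα i) ⟨⟨0, hn⟩, Finset.mem_univ _⟩
  set β : Fin n → ℝ := fun i => α i / abar
  have hMβ : ∀ ε, M ε = cascadeMatrix β ε := fun ε => by
    ext i j
    rw [hM, cascadeMatrix_apply]
    simp only [β, neg_div]
  have hA : 0 < ∑ i, β i := by simpa [β, ← Finset.sum_div] using div_pos hαsum habar_pos
  refine ⟨1 / (2 ^ n * 12 * (1 + ∑ i, β i)), by positivity, fun ε hε hεs => ?_⟩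
  have hV := cascadeForm_mulVec_le (fun i => (div_pos (hα i) habar_pos).le)
    (fun i => div_le_one_of_le₀ (hαle i) habar_pos.le) hA hε
    ((lt_div_iff₀ (by positivity)).mp hεs).le
  have hw : ∀ j : Fin (n + 1), (0 : ℝ) < (2 : ℝ)⁻¹ ^ (j : ℕ) := fun j => by positivity
  rw [hMβ]
  refine ⟨fun lam hlam => ?_, fun x hx => ?_⟩
  · linarith [re_le_of_weightedForm_mulVec_le hw (headDeviation_injective n) hV hlam]
  · have hequil : cascadeMatrix β ε *ᵥ (fun _ => Pd / ∑ i, α i) +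
        (fun i : Fin (n + 1) => if (i : ℕ) = 0 then Pd / abar else 0) = 0 := by
      rw [cascadeMatrix_mulVec_const]
      ext i
      cases i using Fin.cases with
      | zero => simp [β, ← Finset.sum_div]; field_simp; ring
      | succ i => simp
    exact tendsto_pi_nhds.mp <| tendsto_of_weightedForm_mulVec_le hw (headDeviation_injective n)
      (half_pos hA) hV hequil hx
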